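/- Let 𝔒 ⊆ gl_N(ℝ) be the ℝ-span of all matrices 𝔬^k_{(l,i)}. Then gl_N(ℝ) is the internal direct sum net_{C,N} ⊕ 𝔒 as real vector spaces: net_{C,N} ∩ 𝔒 = {0} and net_{C,N} + 𝔒 = gl_N(ℝ). -/

import Mathlib

open Matrix BigOperators

/-- Index type for the standard basis of `ℝ^N`, `N = n 0 + ⋯ + n (C-1)`:
pairs `(c, i)` with `c` a color and `0 ≤ i ≤ n c - 1`. -/
abbrev Idx {C : ℕ} (n : Fin C → ℕ) := Σ c : Fin C, Fin (n c)

/-- A cocolor is a pair `(k, j)` with `1 ≤ j ≤ n k - 1`. -/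
abbrev Cocolor {C : ℕ} (n : Fin C → ℕ) := {p : Idx n // (p.2 : ℕ) ≠ 0}

/-- `ν(σ) = Σ_j e_{(k, σ j)} (e^{(l, j)})ᵀ`. -/
noncomputable def nu {C : ℕ} (n : Fin C → ℕ) (k l : Fin C) (σ : Fin (n l) → Fin (n k)) :
    Matrix (Idx n) (Idx n) ℝ :=
  ∑ j : Fin (n l), Matrix.single (⟨k, σ j⟩ : Idx n) (⟨l, j⟩ : Idx n) 1

/-- The network algebra `net_{C,N}`: the `ℝ`-span of all the `ν(σ)`. -/
noncomputable def net {C : ℕ} (n : Fin C → ℕ) : Submodule ℝ (Matrix (Idx n) (Idx n) ℝ) :=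
  Submodule.span ℝ {M | ∃ (k l : Fin C) (σ : Fin (n l) → Fin (n k)), M = nu n k l σ}

/-- Vectors `x^k_0 = e_{(k,0)}` and `x^k_j = e_{(k,j)} - e_{(k,0)}` for `j ≠ 0`. -/
noncomputable def xv {C : ℕ} (n : Fin C → ℕ) (hn : ∀ c, 0 < n c) (k : Fin C)
    (j : Fin (n k)) : Idx n → ℝ :=
  if (j : ℕ) = 0 then Pi.single (⟨k, j⟩ : Idx n) 1
  else Pi.single (⟨k, j⟩ : Idx n) 1 - Pi.single (⟨k, ⟨0, hn k⟩⟩ : Idx n) 1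

/-- Covectors `X^k_0 = Σ_q e^{(k,q)}` and `X^k_i = e^{(k,i)}` for `i ≠ 0`. -/
noncomputable def Xv {C : ℕ} (n : Fin C → ℕ) (k : Fin C) (i : Fin (n k)) : Idx n → ℝ :=
  if (i : ℕ) = 0 then ∑ q : Fin (n k), Pi.single (⟨k, q⟩ : Idx n) 1
  else Pi.single (⟨k, i⟩ : Idx n) 1

/-- `𝔠^k_l = x^k_0 (X^l_0)ᵀ`. -/
noncomputable def cM {C : ℕ} (n : Fin C → ℕ) (hn : ∀ c, 0 < n c) (k l : Fin C) :
    Matrix (Idx n) (Idx n) ℝ :=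
  vecMulVec (xv n hn k ⟨0, hn k⟩) (Xv n l ⟨0, hn l⟩)

/-- `𝔞^β_l = x^β (X^l_0)ᵀ` for a cocolor `β` and color `l`. -/
noncomputable def aM {C : ℕ} (n : Fin C → ℕ) (hn : ∀ c, 0 < n c) (β : Cocolor n)
    (l : Fin C) : Matrix (Idx n) (Idx n) ℝ :=
  vecMulVec (xv n hn β.1.1 β.1.2) (Xv n l ⟨0, hn l⟩)

/-- `𝔟^β_γ = x^β (X^γ)ᵀ` for cocolors `β, γ`. -/
noncomputable def bM {C : ℕ} (n : Fin C → ℕ) (hn : ∀ c, 0 < n c) (β γ : Cocolor n) :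
    Matrix (Idx n) (Idx n) ℝ :=
  vecMulVec (xv n hn β.1.1 β.1.2) (Xv n γ.1.1 γ.1.2)

/-- `𝔬^k_γ = x^k_0 (X^γ)ᵀ` for a color `k` and cocolor `γ`. -/
noncomputable def oM {C : ℕ} (n : Fin C → ℕ) (hn : ∀ c, 0 < n c) (k : Fin C)
    (γ : Cocolor n) : Matrix (Idx n) (Idx n) ℝ :=
  vecMulVec (xv n hn k ⟨0, hn k⟩) (Xv n γ.1.1 γ.1.2)

/-! ### Auxiliary lemmas -/

section Aux
variable {C : ℕ} {n : Fin C → ℕ} (hn : ∀ c, 0 < n c)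

lemma single_dot_single (a b : Idx n) :
    (Pi.single a (1:ℝ)) ⬝ᵥ Pi.single b 1 = if a = b then 1 else 0 := by
  rw [single_dotProduct, one_mul, Pi.single_apply]

lemma sumsingle_dot (k : Fin C) (b : Idx n) :
    (∑ q : Fin (n k), Pi.single (⟨k,q⟩:Idx n) (1:ℝ)) ⬝ᵥ Pi.single b 1
      = if b.1 = k then 1 else 0 := by
  rw [dotProduct_single, mul_one, Finset.sum_apply]
  obtain ⟨c, p⟩ := b
  by_cases hc : c = k
  · subst hc
    simp [Pi.single_apply]
  · simp [Pi.single_apply, hc, Ne.symm hc]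

lemma mk_eq_mk (k : Fin C) (i j : Fin (n k)) :
    ((⟨k,i⟩ : Idx n) = ⟨k,j⟩) ↔ i = j := by
  simp

lemma mk0_eq_mk0 (k l : Fin C) (x : Fin (n k)) (y : Fin (n l)) (hx : (x:ℕ) = 0)
    (hy : (y:ℕ) = 0) : ((⟨k,x⟩ : Idx n) = ⟨l,y⟩) ↔ k = l := by
  constructor
  · intro h; exact congrArg Sigma.fst h
  · rintro rfl
    simp [Fin.ext_iff, hx, hy]

lemma pair (k l : Fin C) (i : Fin (n k)) (j : Fin (n l)) :
    Xv n k i ⬝ᵥ xv n hn l j = if (⟨k,i⟩ : Idx n) = ⟨l,j⟩ then 1 else 0 := by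
  unfold Xv xv
  by_cases hi : (i:ℕ) = 0 <;> by_cases hj : (j:ℕ) = 0 <;>
    simp only [hi, hj, if_true, if_false, if_pos, if_neg, not_false_iff]
  · rw [sumsingle_dot]
    simp only [mk0_eq_mk0 k l i j hi hj]
    simp [eq_comm]
  · rw [dotProduct_sub, sumsingle_dot, sumsingle_dot]
    have : ((⟨k,i⟩:Idx n) = ⟨l,j⟩) ↔ False := by
      constructor
      · intro h
        obtain rfl : k = l := congrArg Sigma.fst h
        rw [mk_eq_mk] at h
        exact hj (h ▸ hi)
      · exact False.elim
    simp [this]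
  · rw [single_dot_single]
  · rw [dotProduct_sub, single_dot_single, single_dot_single]
    have : ((⟨k,i⟩:Idx n) = ⟨l,⟨0, hn l⟩⟩) ↔ False := by
      constructor
      · intro h
        obtain rfl : k = l := congrArg Sigma.fst h
        rw [mk_eq_mk] at h
        exact hi (by simp [h])
      · exact False.elim
    simp [this]

lemma vmv_sub_left (u u' v : Idx n → ℝ) :
    vecMulVec (u - u') v = vecMulVec u v - vecMulVec u' v := by
  ext i j; simp [vecMulVec_apply, sub_mul]

lemma vmv_add_left (u u' v : Idx n → ℝ) :
    vecMulVec (u + u') v = vecMulVec u v + vecMulVec u' v := by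
  ext i j; simp [vecMulVec_apply, add_mul]

lemma vmv_sum_right {ι : Type*} (s : Finset ι) (u : Idx n → ℝ) (v : ι → Idx n → ℝ) :
    vecMulVec u (∑ q ∈ s, v q) = ∑ q ∈ s, vecMulVec u (v q) := by
  ext i j; simp [vecMulVec_apply, Matrix.sum_apply, Finset.sum_apply, Finset.mul_sum]

lemma vmv_mulVec (u v w : Idx n → ℝ) :
    vecMulVec u v *ᵥ w = (v ⬝ᵥ w) • u := by
  ext i
  simp only [mulVec, vecMulVec_apply, dotProduct, Pi.smul_apply, smul_eq_mul, Finset.sum_mul]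
  exact Finset.sum_congr rfl fun x _ => by ring

lemma vecMul_vmv (u v w : Idx n → ℝ) :
    u ᵥ* vecMulVec v w = (u ⬝ᵥ v) • w := by
  ext j
  simp [vecMul, vecMulVec_apply, dotProduct, Finset.sum_mul, mul_assoc]

lemma vecMul_sum_mats {ι : Type*} (s : Finset ι) (u : Idx n → ℝ)
    (M : ι → Matrix (Idx n) (Idx n) ℝ) :
    u ᵥ* (∑ q ∈ s, M q) = ∑ q ∈ s, u ᵥ* M q := by
  ext j
  simp [vecMul, dotProduct, Matrix.sum_apply, Finset.sum_apply, Finset.mul_sum]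
  rw [Finset.sum_comm]

lemma xv_zero (k : Fin C) : xv n hn k ⟨0, hn k⟩ = Pi.single (⟨k, ⟨0, hn k⟩⟩ : Idx n) 1 := by
  simp [xv]

lemma xv_ne (k : Fin C) (i : Fin (n k)) (hi : (i:ℕ) ≠ 0) :
    xv n hn k i = Pi.single (⟨k, i⟩ : Idx n) 1 - Pi.single (⟨k, ⟨0, hn k⟩⟩ : Idx n) 1 := by
  simp [xv, hi]

lemma Xv_zero (k : Fin C) : Xv n k ⟨0, hn k⟩ = ∑ q : Fin (n k), Pi.single (⟨k, q⟩ : Idx n) 1 := by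
  simp [Xv]

lemma Xv_ne (k : Fin C) (i : Fin (n k)) (hi : (i:ℕ) ≠ 0) :
    Xv n k i = Pi.single (⟨k, i⟩ : Idx n) 1 := by
  simp [Xv, hi]

lemma nu_eq (k l : Fin C) (σ : Fin (n l) → Fin (n k)) :
    nu n k l σ = ∑ j : Fin (n l),
      vecMulVec (Pi.single (⟨k, σ j⟩ : Idx n) 1) (Pi.single (⟨l, j⟩ : Idx n) 1) := by
  simp [nu, Matrix.single_eq_single_vecMulVec_single]

lemma nu_const (k l : Fin C) (m : Fin (n k)) :
    nu n k l (fun _ => m) = vecMulVec (Pi.single (⟨k, m⟩ : Idx n) 1) (Xv n l ⟨0, hn l⟩) := by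
  rw [nu_eq, Xv_zero, vmv_sum_right]

lemma nu_mem (k l : Fin C) (σ : Fin (n l) → Fin (n k)) : nu n k l σ ∈ net n :=
  Submodule.subset_span ⟨k, l, σ, rfl⟩

lemma vmv_b (k l : Fin C) (i : Fin (n k)) (j : Fin (n l)) :
    vecMulVec (Pi.single (⟨k,i⟩ : Idx n) 1 - Pi.single (⟨k,⟨0, hn k⟩⟩ : Idx n) 1)
      (Pi.single (⟨l,j⟩ : Idx n) 1)
      = nu n k l (fun q => if q = j then i else ⟨0, hn k⟩) - nu n k l (fun _ => ⟨0, hn k⟩) := by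
  rw [nu_eq, nu_eq, ← Finset.sum_sub_distrib]
  rw [Finset.sum_eq_single j]
  · simp [vmv_sub_left]
  · intro q _ hq
    simp [hq]
  · simp

lemma key_mem (O : Submodule ℝ (Matrix (Idx n) (Idx n) ℝ))
    (hO : ∀ (k : Fin C) (γ : Cocolor n), oM n hn k γ ∈ O)
    (k l : Fin C) (i : Fin (n k)) (j : Fin (n l)) :
    vecMulVec (xv n hn k i) (Xv n l j) ∈ net n ⊔ O := by
  by_cases hj : (j:ℕ) = 0
  · obtain rfl : j = ⟨0, hn l⟩ := Fin.ext hj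
    by_cases hi : (i:ℕ) = 0
    · obtain rfl : i = ⟨0, hn k⟩ := Fin.ext hi
      refine Submodule.mem_sup_left ?_
      rw [xv_zero hn, ← nu_const hn k l ⟨0, hn k⟩]
      exact nu_mem k l _
    · refine Submodule.mem_sup_left ?_
      rw [xv_ne hn k i hi, vmv_sub_left, ← nu_const hn k l i, ← nu_const hn k l ⟨0, hn k⟩]
      exact sub_mem (nu_mem k l _) (nu_mem k l _)
  · by_cases hi : (i:ℕ) = 0
    · obtain rfl : i = ⟨0, hn k⟩ := Fin.ext hi
      exact Submodule.mem_sup_right (hO k ⟨⟨l, j⟩, hj⟩)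
    · refine Submodule.mem_sup_left ?_
      rw [Xv_ne l j hj, xv_ne hn k i hi, vmv_b hn k l i j]
      exact sub_mem (nu_mem k l _) (nu_mem k l _)

lemma mem2 (O : Submodule ℝ (Matrix (Idx n) (Idx n) ℝ))
    (hO : ∀ (k : Fin C) (γ : Cocolor n), oM n hn k γ ∈ O)
    (k l : Fin C) (i : Fin (n k)) (j : Fin (n l)) :
    vecMulVec (Pi.single (⟨k,i⟩ : Idx n) 1) (Xv n l j) ∈ net n ⊔ O := by
  by_cases hi : (i:ℕ) = 0
  · obtain rfl : i = ⟨0, hn k⟩ := Fin.ext hi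
    rw [← xv_zero hn]
    exact key_mem hn O hO k l _ j
  · have : Pi.single (⟨k,i⟩ : Idx n) (1:ℝ) = xv n hn k i + xv n hn k ⟨0, hn k⟩ := by
      rw [xv_ne hn k i hi, xv_zero hn]; ring
    rw [this, vmv_add_left]
    exact add_mem (key_mem hn O hO k l i j) (key_mem hn O hO k l _ j)

lemma std_mem (O : Submodule ℝ (Matrix (Idx n) (Idx n) ℝ))
    (hO : ∀ (k : Fin C) (γ : Cocolor n), oM n hn k γ ∈ O)
    (a b : Idx n) : Matrix.single a b (1:ℝ) ∈ net n ⊔ O := by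
  obtain ⟨k, i⟩ := a
  obtain ⟨l, j⟩ := b
  rw [Matrix.single_eq_single_vecMulVec_single]
  by_cases hj : (j:ℕ) = 0
  · obtain rfl : j = ⟨0, hn l⟩ := Fin.ext hj
    have hdec : Pi.single (⟨l, ⟨0, hn l⟩⟩ : Idx n) (1:ℝ)
        = Xv n l ⟨0, hn l⟩ - ∑ q ∈ Finset.univ.erase ⟨0, hn l⟩, Xv n l q := by
      have h1 : ∑ q ∈ Finset.univ.erase (⟨0, hn l⟩ : Fin (n l)), Xv n l q
          = ∑ q ∈ Finset.univ.erase (⟨0, hn l⟩ : Fin (n l)),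
              Pi.single (⟨l, q⟩ : Idx n) (1:ℝ) := by
        refine Finset.sum_congr rfl fun q hq => ?_
        refine Xv_ne l q fun h0 => ?_
        exact (Finset.mem_erase.1 hq).1 (Fin.ext h0)
      rw [h1, Xv_zero, ← Finset.add_sum_erase _ _ (Finset.mem_univ (⟨0, hn l⟩ : Fin (n l)))]
      ring
    rw [hdec]
    have hsub : vecMulVec (Pi.single (⟨k,i⟩ : Idx n) (1:ℝ))
        (Xv n l ⟨0, hn l⟩ - ∑ q ∈ Finset.univ.erase ⟨0, hn l⟩, Xv n l q)
        = vecMulVec (Pi.single (⟨k,i⟩ : Idx n) 1) (Xv n l ⟨0, hn l⟩)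
          - ∑ q ∈ Finset.univ.erase (⟨0, hn l⟩ : Fin (n l)),
              vecMulVec (Pi.single (⟨k,i⟩ : Idx n) 1) (Xv n l q) := by
      rw [← vmv_sum_right]
      ext a b
      simp [vecMulVec_apply, mul_sub]
    rw [hsub]
    exact sub_mem (mem2 hn O hO k l i _) (sum_mem fun q _ => mem2 hn O hO k l i q)
  · rw [← Xv_ne l j hj]
    exact mem2 hn O hO k l i j

end Aux

/-! ### The projection maps -/

/-- `Φ(M)(k, γ) = X^k_0 M x^γ`. -/
noncomputable def Phi {C : ℕ} (n : Fin C → ℕ) (hn : ∀ c, 0 < n c) :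
    Matrix (Idx n) (Idx n) ℝ →ₗ[ℝ] (Fin C × Cocolor n → ℝ) where
  toFun M := fun p => Xv n p.1 ⟨0, hn p.1⟩ ⬝ᵥ (M *ᵥ xv n hn p.2.1.1 p.2.1.2)
  map_add' M N := by
    funext p
    simp [Matrix.add_mulVec, dotProduct_add]
  map_smul' c M := by
    funext p
    simp [Matrix.smul_mulVec, dotProduct_smul]

/-- `Ψ(f) = Σ f(k,γ) 𝔬^k_γ`. -/
noncomputable def Psi {C : ℕ} (n : Fin C → ℕ) (hn : ∀ c, 0 < n c) :
    (Fin C × Cocolor n → ℝ) →ₗ[ℝ] Matrix (Idx n) (Idx n) ℝ where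
  toFun f := ∑ p : Fin C × Cocolor n, f p • oM n hn p.1 p.2
  map_add' f g := by simp [add_smul, Finset.sum_add_distrib]
  map_smul' c f := by simp [smul_smul, Finset.smul_sum]

lemma Phi_nu {C : ℕ} (n : Fin C → ℕ) (hn : ∀ c, 0 < n c) (k l : Fin C)
    (σ : Fin (n l) → Fin (n k)) : Phi n hn (nu n k l σ) = 0 := by
  funext p
  obtain ⟨k', γ⟩ := p
  show Xv n k' ⟨0, hn k'⟩ ⬝ᵥ (nu n k l σ *ᵥ xv n hn γ.1.1 γ.1.2) = 0
  rw [dotProduct_mulVec, nu_eq, vecMul_sum_mats]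
  have hterm : ∀ j : Fin (n l),
      Xv n k' ⟨0, hn k'⟩ ᵥ* vecMulVec (Pi.single (⟨k, σ j⟩ : Idx n) 1)
        (Pi.single (⟨l, j⟩ : Idx n) 1)
      = (if k = k' then (1:ℝ) else 0) • (Pi.single (⟨l, j⟩ : Idx n) 1 : Idx n → ℝ) := by
    intro j
    rw [vecMul_vmv, Xv_zero, sumsingle_dot]
  simp only [hterm]
  by_cases hk : k = k'
  · simp only [hk, if_true, one_smul]
    rw [← Xv_zero hn l, pair hn l γ.1.1 ⟨0, hn l⟩ γ.1.2, if_neg]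
    intro h
    obtain rfl : l = γ.1.1 := congrArg Sigma.fst h
    rw [mk_eq_mk] at h
    exact γ.2 (by simp [← h])
  · simp [hk]

lemma Phi_oM {C : ℕ} (n : Fin C → ℕ) (hn : ∀ c, 0 < n c) (k : Fin C) (γ : Cocolor n) :
    Phi n hn (oM n hn k γ) = Pi.single (k, γ) 1 := by
  funext p
  obtain ⟨k', γ'⟩ := p
  show Xv n k' ⟨0, hn k'⟩ ⬝ᵥ (oM n hn k γ *ᵥ xv n hn γ'.1.1 γ'.1.2) = _
  rw [oM, vmv_mulVec, dotProduct_smul, smul_eq_mul, pair hn, pair hn, Pi.single_apply]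
  have h1 : ((⟨γ.1.1, γ.1.2⟩ : Idx n) = ⟨γ'.1.1, γ'.1.2⟩) ↔ γ' = γ := by
    rw [Sigma.eta, Sigma.eta, Subtype.ext_iff, eq_comm]
  have h2 : ((⟨k', ⟨0, hn k'⟩⟩ : Idx n) = ⟨k, ⟨0, hn k⟩⟩) ↔ k' = k :=
    mk0_eq_mk0 k' k _ _ rfl rfl
  have h3 : ((k', γ') = (k, γ)) ↔ (k' = k ∧ γ' = γ) := Prod.ext_iff
  by_cases hA : γ' = γ <;> by_cases hB : k' = k <;> simp [h1, h2, h3, hA, hB]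

lemma Psi_Phi_oM {C : ℕ} (n : Fin C → ℕ) (hn : ∀ c, 0 < n c) (k : Fin C) (γ : Cocolor n) :
    Psi n hn (Phi n hn (oM n hn k γ)) = oM n hn k γ := by
  rw [Phi_oM]
  show (∑ p : Fin C × Cocolor n,
      (Pi.single (k, γ) (1:ℝ) : Fin C × Cocolor n → ℝ) p • oM n hn p.1 p.2) = oM n hn k γ
  rw [Finset.sum_eq_single (k, γ)]
  · simp
  · intro p _ hp
    rw [Pi.single_apply, if_neg hp, zero_smul]
  · simp

/-- `gl_N(ℝ) = net_{C,N} ⊕ 𝔒` as real vector spaces. -/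
theorem stmt5 {C : ℕ} (hC : 0 < C) (n : Fin C → ℕ) (hn : ∀ c, 0 < n c) :
    net n ⊓ Submodule.span ℝ {M | ∃ (k : Fin C) (γ : Cocolor n), M = oM n hn k γ} = ⊥ ∧
    net n ⊔ Submodule.span ℝ {M | ∃ (k : Fin C) (γ : Cocolor n), M = oM n hn k γ} = ⊤ := by
  constructor
  · rw [eq_bot_iff]
    rintro M hM
    obtain ⟨h1, h2⟩ := Submodule.mem_inf.1 hM
    have hPhi : Phi n hn M = 0 := by
      have hle : net n ≤ LinearMap.ker (Phi n hn) := by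
        rw [net, Submodule.span_le]
        rintro _ ⟨k, l, σ, rfl⟩
        exact LinearMap.mem_ker.2 (Phi_nu n hn k l σ)
      exact hle h1
    have hid : Psi n hn (Phi n hn M) = M := by
      have hle : Submodule.span ℝ {M | ∃ (k : Fin C) (γ : Cocolor n), M = oM n hn k γ}
          ≤ LinearMap.eqLocus ((Psi n hn) ∘ₗ (Phi n hn)) LinearMap.id := by
        rw [Submodule.span_le]
        rintro _ ⟨k, γ, rfl⟩
        exact Psi_Phi_oM n hn k γ
      exact hle h2
    rw [Submodule.mem_bot, ← hid, hPhi, map_zero]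
  · rw [eq_top_iff]
    rintro M -
    rw [matrix_eq_sum_single M]
    refine sum_mem fun a _ => sum_mem fun b _ => ?_
    have h : Matrix.single a b (M a b) = (M a b) • Matrix.single a b (1:ℝ) := by
      simp
    rw [h]
    have hO : ∀ (k : Fin C) (γ : Cocolor n),
        oM n hn k γ ∈ Submodule.span ℝ {M | ∃ (k : Fin C) (γ : Cocolor n), M = oM n hn k γ} :=
      fun k γ => Submodule.subset_span ⟨k, γ, rfl⟩
    exact Submodule.smul_mem _ (M a b) (std_mem hn _ hO a b)
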